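/- In a spherical triangle with angles α₁', α₂', θ' and opposite sides r₂, r₁, r₃, the partial derivative of ℓ₁ = 2α₁' sin(r₁) with respect to k₂ = cot(r₂), holding k₁ = cot(r₁) fixed, equals -2 sin²(r₁) sin²(α₁')/sin(θ'). -/

import Mathlib

open Real

/-- Inverse cotangent, with values in `(0, π)`. -/
noncomputable def arccot (x : ℝ) : ℝ := π / 2 - Real.arctan x

theorem sin_arccot_sq (x : ℝ) : sin (arccot x) ^ 2 = (1 + x ^ 2)⁻¹ := by
  rw [arccot, sin_pi_div_two_sub, cos_arctan, div_pow, one_pow, sq_sqrt (by positivity), one_div]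

theorem hasDerivAt_arccot (x : ℝ) : HasDerivAt arccot (-sin (arccot x) ^ 2) x := by
  rw [sin_arccot_sq]
  exact (hasDerivAt_arctan' x).const_sub (π / 2)

theorem deriv_ell_one_general (θ' r₁ k₂ : ℝ) :
    HasDerivAt
      (fun k : ℝ =>
        2 * arccot ((k * Real.sin r₁ - Real.cos r₁ * Real.cos θ') / Real.sin θ') * Real.sin r₁)
      (-2 * Real.sin r₁ ^ 2 *
        Real.sin (arccot ((k₂ * Real.sin r₁ - Real.cos r₁ * Real.cos θ') / Real.sin θ')) ^ 2 /
        Real.sin θ')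
      k₂ := by
  have hcot : HasDerivAt (fun k : ℝ => (k * sin r₁ - cos r₁ * cos θ') / sin θ')
      (sin r₁ / sin θ') k₂ := by
    simpa using (((hasDerivAt_id k₂).mul_const (sin r₁)).sub_const (cos r₁ * cos θ')).div_const
      (sin θ')
  refine ((((hasDerivAt_arccot _).comp k₂ hcot).const_mul 2).mul_const (sin r₁)).congr_deriv ?_
  ring

/-- Fix `θ' ∈ (0, π)` and `r₁ ∈ (0, π/2)`.  Define the half-angle `α₁'` as a
function of `k₂ = cot r₂` by the cotangent four-part formula
`α₁'(k₂) = arccot ((k₂ sin r₁ - cos r₁ cos θ') / sin θ')`, and set `ℓ₁(k₂) = 2 α₁'(k₂) sin r₁`.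
Then `∂ℓ₁/∂k₂ = -2 sin²(r₁) sin²(α₁') / sin θ'` (with `k₁ = cot r₁` held fixed). -/
theorem deriv_ell_one (θ' r₁ k₂ : ℝ) (hθ' : θ' ∈ Set.Ioo 0 π) (h₁ : r₁ ∈ Set.Ioo 0 (π / 2)) :
    HasDerivAt
      (fun k : ℝ =>
        2 * arccot ((k * Real.sin r₁ - Real.cos r₁ * Real.cos θ') / Real.sin θ') * Real.sin r₁)
      (-2 * Real.sin r₁ ^ 2 *
        Real.sin (arccot ((k₂ * Real.sin r₁ - Real.cos r₁ * Real.cos θ') / Real.sin θ')) ^ 2 /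
        Real.sin θ')
      k₂ :=
  deriv_ell_one_general θ' r₁ k₂
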